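/- Suppose P is a regular power series method and the Korovkin test hypotheses hold. Let σ : X × X → ℝ be a continuous function with σ(x, x) = 0 for every x ∈ X, and for fixed x write σ_x(y) = σ(x, y). Then st_P-lim_{j→∞} ( max_{x∈X} |T_j(σ_x)(x)| ) = 0. -/

import Mathlib

open Filter Topology
open scoped ENNReal

/-- A power series method `P`: a sequence `(s j)` of nonnegative reals with `s 0 > 0`
whose power series `s(t) = ∑ s j * t ^ j` has radius of convergence `R`, `0 < R ≤ ∞`. -/
structure PowerSeriesMethod where
  s : ℕ → ℝ
  s_nonneg : ∀ j, 0 ≤ s j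
  s0_pos : 0 < s 0
  R : ℝ≥0∞
  R_pos : 0 < R
  summable_of_lt : ∀ t : ℝ, 0 < t → ENNReal.ofReal t < R → Summable fun j => s j * t ^ j
  not_summable_of_gt : ∀ t : ℝ, R < ENNReal.ofReal t → ¬ Summable fun j => s j * t ^ j

namespace PowerSeriesMethod

/-- The filter of `t` tending to `R` from the left (through `0 < t < R`);
if `R = ∞` this is `atTop`. -/
noncomputable def limFilter (P : PowerSeriesMethod) : Filter ℝ :=
  if P.R = ⊤ then Filter.atTop else nhdsWithin P.R.toReal (Set.Ioo 0 P.R.toReal)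

/-- `s(t) = ∑ s j t ^ j`. -/
noncomputable def sum (P : PowerSeriesMethod) (t : ℝ) : ℝ := ∑' j, P.s j * t ^ j

/-- The quotient `(∑_{j ∈ E} s j t ^ j) / s(t)` whose limit as `t → R⁻` is the `P`-density. -/
noncomputable def densityFn (P : PowerSeriesMethod) (E : Set ℕ) (t : ℝ) : ℝ :=
  (∑' j, Set.indicator E (fun j => P.s j * t ^ j) j) / P.sum t

/-- `E ⊆ ℕ` has `P`-density `d`. -/
def HasDensity (P : PowerSeriesMethod) (E : Set ℕ) (d : ℝ) : Prop :=
  Tendsto (P.densityFn E) P.limFilter (𝓝 d)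

/-- The power series method `P` is regular. -/
def Regular (P : PowerSeriesMethod) : Prop :=
  ∀ j, Tendsto (fun t => P.s j * t ^ j / P.sum t) P.limFilter (𝓝 0)

/-- The sequence `x` is `P`-statistically convergent to `L`. -/
def StatTendsto (P : PowerSeriesMethod) (x : ℕ → ℝ) (L : ℝ) : Prop :=
  ∀ ε : ℝ, 0 < ε → P.HasDensity {j | ε ≤ |x j - L|} 0

end PowerSeriesMethod

/-!
Fix `ε > 0`. By compactness, `|σ(x, y)| ≤ ε + K Q_x(y)` for some constant `K`, since `Q` is
bounded below by a positive constant on the compact set where `|σ| ≥ ε`. Positivity of `T_j`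
turns this into `|T_j(σ_x)(x)| ≤ ε T_j(1)(x) + K T_j(Q_x)(x)`. As `Q_x` is a fixed combination
of the test functions and `Q_x(x) = 0`, the last term is bounded by `K B_j` with
`B_j = Σ_λ ‖g_λ‖ ‖T_j ψ_λ − ψ_λ‖`, and `T_j(1)` is bounded by `A + C B_j` because
`1 ≤ c⁻¹ (Q_a + Q_b)` for any two distinct points `a`, `b`. Hence
`max_x |T_j(σ_x)(x)| ≤ ε + C' B_j`, and `B_j` is `P`-statistically null since the
`P`-statistically null sequences form a vector space.
-/

namespace PowerSeriesMethod

variable (P : PowerSeriesMethod)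

lemma eventually_pos_and_lt_R : ∀ᶠ t in P.limFilter, 0 < t ∧ ENNReal.ofReal t < P.R := by
  unfold limFilter
  split_ifs with h
  · filter_upwards [eventually_gt_atTop 0] with t ht
    exact ⟨ht, h ▸ ENNReal.ofReal_lt_top⟩
  · filter_upwards [self_mem_nhdsWithin] with t ht
    exact ⟨ht.1, (ENNReal.ofReal_lt_iff_lt_toReal ht.1.le h).mpr ht.2⟩

lemma densityFn_nonneg (E : Set ℕ) {t : ℝ} (ht : 0 ≤ t) : 0 ≤ P.densityFn E t :=
  div_nonneg (tsum_nonneg fun j => Set.indicator_nonneg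
      (fun j _ => mul_nonneg (P.s_nonneg j) (pow_nonneg ht j)) j)
    (tsum_nonneg fun j => mul_nonneg (P.s_nonneg j) (pow_nonneg ht j))

lemma densityFn_le_add {E F₁ F₂ : Set ℕ} (h : E ⊆ F₁ ∪ F₂) {t : ℝ} (ht : 0 < t)
    (hR : ENNReal.ofReal t < P.R) :
    P.densityFn E t ≤ P.densityFn F₁ t + P.densityFn F₂ t := by
  set f : ℕ → ℝ := fun j => P.s j * t ^ j
  have hf : ∀ j, 0 ≤ f j := fun j => mul_nonneg (P.s_nonneg j) (pow_nonneg ht.le j)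
  have hs : Summable f := P.summable_of_lt t ht hR
  have hpoint : ∀ j, E.indicator f j ≤ F₁.indicator f j + F₂.indicator f j := by
    intro j
    have h₁ := Set.indicator_nonneg (fun j _ => hf j) (s := F₁) j
    have h₂ := Set.indicator_nonneg (fun j _ => hf j) (s := F₂) j
    by_cases hj : j ∈ E
    · rcases h hj with hj₁ | hj₂
      · rw [Set.indicator_of_mem hj, Set.indicator_of_mem hj₁]; linarith
      · rw [Set.indicator_of_mem hj, Set.indicator_of_mem hj₂]; linarith
    · rw [Set.indicator_of_notMem hj]; linarith
  have hnum : ∑' j, E.indicator f j ≤ ∑' j, F₁.indicator f j + ∑' j, F₂.indicator f j := by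
    rw [← (hs.indicator F₁).tsum_add (hs.indicator F₂)]
    exact (hs.indicator E).tsum_le_tsum hpoint ((hs.indicator F₁).add (hs.indicator F₂))
  have hsum : 0 ≤ P.sum t := tsum_nonneg hf
  rw [densityFn, densityFn, densityFn, ← add_div]
  exact div_le_div_of_nonneg_right hnum hsum

lemma HasDensity.of_subset_union {E F₁ F₂ : Set ℕ} (h₁ : P.HasDensity F₁ 0)
    (h₂ : P.HasDensity F₂ 0) (h : E ⊆ F₁ ∪ F₂) : P.HasDensity E 0 := by
  refine tendsto_of_tendsto_of_tendsto_of_le_of_le' tendsto_const_nhds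
    (by simpa using h₁.add h₂) ?_ ?_
  · filter_upwards [P.eventually_pos_and_lt_R] with t ht
    exact P.densityFn_nonneg E ht.1.le
  · filter_upwards [P.eventually_pos_and_lt_R] with t ht
    exact P.densityFn_le_add h ht.1 ht.2

lemma HasDensity.mono {E F : Set ℕ} (hF : P.HasDensity F 0) (h : E ⊆ F) :
    P.HasDensity E 0 :=
  HasDensity.of_subset_union P hF hF (by rwa [Set.union_self])

lemma statTendsto_zero : P.StatTendsto 0 0 := by
  intro ε hε
  have hempty : {j | ε ≤ |(0 : ℕ → ℝ) j - 0|} = ∅ := by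
    ext j; simp [not_le.mpr hε]
  have hzero : P.densityFn ∅ = fun _ => 0 := funext fun t => by simp [densityFn]
  rw [hempty, HasDensity, hzero]
  exact tendsto_const_nhds

variable {P}

lemma StatTendsto.add {x y : ℕ → ℝ} (hx : P.StatTendsto x 0) (hy : P.StatTendsto y 0) :
    P.StatTendsto (x + y) 0 := by
  intro ε hε
  refine HasDensity.of_subset_union P (hx (ε / 2) (half_pos hε)) (hy (ε / 2) (half_pos hε)) ?_
  intro j hj
  by_contra hcon
  simp only [Set.mem_union, Set.mem_ofPred_eq, sub_zero, not_or, not_le, Pi.add_apply] at hj hcon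
  linarith [abs_add_le (x j) (y j)]

lemma StatTendsto.of_abs_le_add_mul {x y : ℕ → ℝ} (hy : P.StatTendsto y 0)
    (h : ∀ ε > 0, ∃ C, ∀ j, |x j| ≤ ε + C * |y j|) : P.StatTendsto x 0 := by
  intro ε hε
  obtain ⟨C, hC⟩ := h (ε / 2) (half_pos hε)
  have hC₁ : 0 < |C| + 1 := by positivity
  refine HasDensity.mono P (hy (ε / 2 / (|C| + 1)) (div_pos (half_pos hε) hC₁)) ?_
  intro j hj
  by_contra hcon
  simp only [Set.mem_ofPred_eq, sub_zero, not_le] at hj hcon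
  have hCy : C * |y j| < ε / 2 := by
    calc C * |y j| ≤ (|C| + 1) * |y j| := by gcongr; linarith [le_abs_self C]
      _ < (|C| + 1) * (ε / 2 / (|C| + 1)) := by gcongr
      _ = ε / 2 := by field_simp
  linarith [hC j]

lemma StatTendsto.const_mul {x : ℕ → ℝ} (hx : P.StatTendsto x 0) (c : ℝ) :
    P.StatTendsto (fun j => c * x j) 0 :=
  hx.of_abs_le_add_mul fun ε hε => ⟨|c|, fun j => by rw [abs_mul]; linarith⟩

lemma StatTendsto.finset_sum {ι : Type*} (s : Finset ι) {x : ι → ℕ → ℝ}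
    (h : ∀ i ∈ s, P.StatTendsto (x i) 0) : P.StatTendsto (fun j => ∑ i ∈ s, x i j) 0 := by
  simpa only [← Finset.sum_apply] using
    Finset.sum_induction x (fun z => P.StatTendsto z 0) (fun _ _ => StatTendsto.add)
      P.statTendsto_zero h

end PowerSeriesMethod

lemma exists_abs_le_add_mul_of_eq_zero {Y : Type*} [TopologicalSpace Y] [CompactSpace Y]
    (σ q : C(Y, ℝ)) (hq : ∀ p, 0 ≤ q p) (hσ : ∀ p, q p = 0 → σ p = 0) {ε : ℝ} (hε : 0 < ε) :
    ∃ K, 0 ≤ K ∧ ∀ p, |σ p| ≤ ε + K * q p := by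
  set S : Set Y := {p | ε ≤ |σ p|}
  have hS : IsCompact S := (isClosed_le continuous_const σ.continuous.abs).isCompact
  have hqS : ∀ p ∈ S, 0 < q p := fun p hp =>
    (hq p).lt_of_ne fun h => by
      have hp : ε ≤ |σ p| := hp
      rw [hσ p h.symm, abs_zero] at hp
      linarith
  obtain ⟨m, hm, hmS⟩ := hS.exists_forall_le' q.continuous.continuousOn hqS
  refine ⟨‖σ‖ / m, by positivity, fun p => ?_⟩
  by_cases hp : p ∈ S
  · calc |σ p| ≤ ‖σ‖ := σ.norm_coe_le_norm p
      _ = ‖σ‖ / m * m := (div_mul_cancel₀ _ hm.ne').symm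
      _ ≤ ‖σ‖ / m * q p := by gcongr; exact hmS p hp
      _ ≤ ε + ‖σ‖ / m * q p := by linarith
  · have hp : |σ p| < ε := not_le.mp hp
    have : 0 ≤ ‖σ‖ / m * q p := mul_nonneg (by positivity) (hq p)
    linarith

lemma abs_map_apply_le_of_abs_le {X : Type*} [TopologicalSpace X]
    (T : C(X, ℝ) →ₚ[ℝ] C(X, ℝ)) {f u : C(X, ℝ)} (h : ∀ y, |f y| ≤ u y) (x : X) :
    |T f x| ≤ T u x := by
  have hupper : f ≤ u := fun y => (le_abs_self _).trans (h y)
  have hlower : -u ≤ f := fun y => by simpa using neg_le_of_abs_le (h y)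
  have hTlower := OrderHomClass.mono T hlower x
  rw [map_neg] at hTlower
  exact abs_le.mpr ⟨by simpa using hTlower, OrderHomClass.mono T hupper x⟩

section Korovkin

variable {X : Type*} [TopologicalSpace X] {d : ℕ} (g ψ : Fin d → C(X, ℝ))

/-- `(x, y) ↦ Q_x(y)`. -/
def korovkinKernel : C(X × X, ℝ) :=
  ∑ l, (g l).comp ContinuousMap.fst * (ψ l).comp ContinuousMap.snd

lemma korovkinKernel_apply (p : X × X) :
    korovkinKernel g ψ p = ∑ l, g l p.1 * ψ l p.2 := by
  simp [korovkinKernel]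

lemma korovkinKernel_curry (x : X) : (korovkinKernel g ψ).curry x = ∑ l, g l x • ψ l := by
  ext y
  simp [korovkinKernel_apply]

variable [CompactSpace X]

noncomputable def korovkinError (T : C(X, ℝ) → C(X, ℝ)) : ℝ := ∑ l, ‖g l‖ * ‖T (ψ l) - ψ l‖

lemma korovkinError_nonneg (T : C(X, ℝ) → C(X, ℝ)) : 0 ≤ korovkinError g ψ T :=
  Finset.sum_nonneg fun _ _ => by positivity

lemma abs_map_korovkinKernel_curry_sub_le {F : Type*} [FunLike F C(X, ℝ) C(X, ℝ)]
    [LinearMapClass F ℝ C(X, ℝ) C(X, ℝ)] (T : F) (x y : X) :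
    |T ((korovkinKernel g ψ).curry x) y - (korovkinKernel g ψ).curry x y|
      ≤ korovkinError g ψ T := by
  have hsum : T ((korovkinKernel g ψ).curry x) y - (korovkinKernel g ψ).curry x y
      = ∑ l, g l x * (T (ψ l) - ψ l) y := by
    simp [korovkinKernel_curry, map_sum, mul_sub, Finset.sum_sub_distrib]
  rw [hsum]
  refine (Finset.abs_sum_le_sum_abs _ _).trans (Finset.sum_le_sum fun l _ => ?_)
  rw [abs_mul]
  exact mul_le_mul ((g l).norm_coe_le_norm x) ((T (ψ l) - ψ l).norm_coe_le_norm y)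
    (abs_nonneg _) (norm_nonneg _)

lemma exists_map_one_apply_le [Nontrivial X] (hQpos : ∀ p, 0 ≤ korovkinKernel g ψ p)
    (hQzero : ∀ x y, korovkinKernel g ψ (x, y) = 0 ↔ y = x) :
    ∃ A C : ℝ, ∀ (T : C(X, ℝ) →ₚ[ℝ] C(X, ℝ)) y, T 1 y ≤ A + C * korovkinError g ψ T := by
  obtain ⟨a, b, hab⟩ := exists_pair_ne X
  set Q := (korovkinKernel g ψ).curry
  set u := Q a + Q b
  have hu : ∀ y, 0 < u y := fun y => by
    have ha := hQpos (a, y)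
    have hb := hQpos (b, y)
    change 0 < korovkinKernel g ψ (a, y) + korovkinKernel g ψ (b, y)
    refine (add_nonneg ha hb).lt_of_ne' fun h => hab ?_
    obtain ⟨ha0, hb0⟩ := (add_eq_zero_iff_of_nonneg ha hb).mp h
    rw [← (hQzero a y).mp ha0]
    exact (hQzero b y).mp hb0
  obtain ⟨c, hc, hcu⟩ := isCompact_univ.exists_forall_le' u.continuous.continuousOn
    (fun y _ => hu y) (a := 0)
  have hone : (1 : C(X, ℝ)) ≤ c⁻¹ • u := ContinuousMap.le_def.mpr fun y => by
    rw [ContinuousMap.one_apply, ContinuousMap.smul_apply, smul_eq_mul, le_inv_mul_iff₀ hc,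
      mul_one]
    exact hcu y (Set.mem_univ y)
  refine ⟨c⁻¹ * ‖u‖, 2 * c⁻¹, fun T y => ?_⟩
  have hQ : ∀ x, T (Q x) y ≤ Q x y + korovkinError g ψ T := fun x =>
    sub_le_iff_le_add'.mp (le_of_abs_le (abs_map_korovkinKernel_curry_sub_le g ψ T x y))
  calc T 1 y ≤ T (c⁻¹ • u) y := OrderHomClass.mono T hone y
    _ = c⁻¹ * (T (Q a) y + T (Q b) y) := by simp [u, mul_add]
    _ ≤ c⁻¹ * (u y + 2 * korovkinError g ψ T) := by
        refine mul_le_mul_of_nonneg_left ?_ (by positivity)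
        linarith [hQ a, hQ b, show u y = Q a y + Q b y from rfl]
    _ ≤ c⁻¹ * (‖u‖ + 2 * korovkinError g ψ T) := by
        gcongr
        exact (le_abs_self _).trans (u.norm_coe_le_norm y)
    _ = c⁻¹ * ‖u‖ + 2 * c⁻¹ * korovkinError g ψ T := by ring

lemma exists_abs_map_curry_apply_self_le [Nontrivial X] (hQpos : ∀ p, 0 ≤ korovkinKernel g ψ p)
    (hQzero : ∀ x y, korovkinKernel g ψ (x, y) = 0 ↔ y = x) (σ : C(X × X, ℝ))
    (hσ : ∀ x, σ (x, x) = 0) {ε : ℝ} (hε : 0 < ε) :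
    ∃ C, ∀ (T : C(X, ℝ) →ₚ[ℝ] C(X, ℝ)) x, |T (σ.curry x) x| ≤ ε + C * korovkinError g ψ T := by
  obtain ⟨A, C, hT1⟩ := exists_map_one_apply_le g ψ hQpos hQzero
  set ε' := ε / (|A| + 1)
  have hε' : 0 < ε' := by positivity
  have hε'A : ε' * A ≤ ε := by
    calc ε' * A ≤ ε' * (|A| + 1) := by gcongr; linarith [le_abs_self A]
      _ = ε := div_mul_cancel₀ _ (by positivity)
  obtain ⟨K, hK, hσK⟩ := exists_abs_le_add_mul_of_eq_zero σ (korovkinKernel g ψ) hQpos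
    (fun ⟨x, y⟩ hxy => by rw [(hQzero x y).mp hxy]; exact hσ x) hε'
  refine ⟨ε' * C + K, fun T x => ?_⟩
  set Q := (korovkinKernel g ψ).curry
  set B := korovkinError g ψ T
  have hQx : T (Q x) x ≤ B := by
    have h := le_of_abs_le (abs_map_korovkinKernel_curry_sub_le g ψ T x x)
    have hdiag : Q x x = 0 := (hQzero x x).mpr rfl
    linarith
  calc |T (σ.curry x) x| ≤ T (ε' • 1 + K • Q x) x :=
        abs_map_apply_le_of_abs_le T (fun y => by simpa [Q] using hσK (x, y)) x
    _ = ε' * T 1 x + K * T (Q x) x := by simp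
    _ ≤ ε' * (A + C * B) + K * B := by gcongr; exact hT1 T x
    _ = ε' * A + (ε' * C + K) * B := by ring
    _ ≤ ε + (ε' * C + K) * B := by gcongr

end Korovkin

theorem statTendsto_sup_T_sigma_general (P : PowerSeriesMethod)
    {X : Type*} [TopologicalSpace X] [CompactSpace X] [Nontrivial X]
    (d : ℕ) (ψ g : Fin d → C(X, ℝ))
    (hQpos : ∀ x y : X, 0 ≤ ∑ l, g l x * ψ l y)
    (hQzero : ∀ x y : X, (∑ l, g l x * ψ l y) = 0 ↔ y = x)
    (T : ℕ → C(X, ℝ) →ₗ[ℝ] C(X, ℝ))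
    (hTpos : ∀ j (f : C(X, ℝ)), 0 ≤ f → 0 ≤ T j f)
    (hTconv : ∀ l, P.StatTendsto (fun j => ‖T j (ψ l) - ψ l‖) 0)
    (σ : C(X × X, ℝ)) (hσ : ∀ x : X, σ (x, x) = 0) :
    P.StatTendsto (fun j => ⨆ x : X, |T j (σ.curry x) x|) 0 := by
  have hKpos : ∀ p, 0 ≤ korovkinKernel g ψ p := fun p => by
    simpa [korovkinKernel_apply] using hQpos p.1 p.2
  have hKzero : ∀ x y, korovkinKernel g ψ (x, y) = 0 ↔ y = x := by
    simpa [korovkinKernel_apply] using hQzero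
  have herror : P.StatTendsto (fun j => korovkinError g ψ (T j)) 0 :=
    PowerSeriesMethod.StatTendsto.finset_sum _ fun l _ => (hTconv l).const_mul ‖g l‖
  refine herror.of_abs_le_add_mul fun ε hε => ?_
  obtain ⟨C, hC⟩ := exists_abs_map_curry_apply_self_le g ψ hKpos hKzero σ hσ hε
  refine ⟨C, fun j => ?_⟩
  rw [abs_of_nonneg (Real.iSup_nonneg fun _ => abs_nonneg _),
    abs_of_nonneg (korovkinError_nonneg g ψ _)]
  exact ciSup_le fun x => hC (.mk₀ (T j) (hTpos j)) x

/-- under the Korovkin test hypotheses, if `σ : X × X → ℝ` is continuous with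
`σ(x, x) = 0`, then `st_P-lim (max_{x ∈ X} |T_j(σ_x)(x)|) = 0`, where `σ_x(y) = σ(x, y)`. -/
theorem statTendsto_sup_T_sigma (P : PowerSeriesMethod) (hP : P.Regular)
    {X : Type*} [TopologicalSpace X] [CompactSpace X] [T2Space X] [Nontrivial X]
    (d : ℕ) (ψ g : Fin d → C(X, ℝ))
    (hQpos : ∀ x y : X, 0 ≤ ∑ l, g l x * ψ l y)
    (hQzero : ∀ x y : X, (∑ l, g l x * ψ l y) = 0 ↔ y = x)
    (T : ℕ → C(X, ℝ) →ₗ[ℝ] C(X, ℝ))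
    (hTpos : ∀ j (f : C(X, ℝ)), 0 ≤ f → 0 ≤ T j f)
    (hTconv : ∀ l, P.StatTendsto (fun j => ‖T j (ψ l) - ψ l‖) 0)
    (σ : C(X × X, ℝ)) (hσ : ∀ x : X, σ (x, x) = 0) :
    P.StatTendsto (fun j => ⨆ x : X, |T j (σ.curry x) x|) 0 :=
  statTendsto_sup_T_sigma_general P d ψ g hQpos hQzero T hTpos hTconv σ hσ
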